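/- arXiv:1002.3616 — 2 statements merged into one kernel-verified Lean document; each statement's English description precedes it below -/
import Mathlib

section
/- The interior derivative is a graded derivation over the contracted wedge product: for a p-form α, any form β, and a vector X, X⌟(α∧ₙβ) = (-1)^n (X⌟α)∧ₙβ + (-1)^p α∧ₙ(X⌟β). -/
noncomputable section
open CliffordAlgebra

variable {V : Type*} [AddCommGroup V] [Module ℝ V]

/-- The Clifford product (with respect to the quadratic form `Q`, the metric)
transported to the exterior algebra via `CliffordAlgebra.equivExterior`. -/
def cliffMul (Q : QuadraticForm ℝ V) (α β : ExteriorAlgebra ℝ V) : ExteriorAlgebra ℝ V :=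
  equivExterior Q ((equivExterior Q).symm α * (equivExterior Q).symm β)

/-- The submodule of `p`-forms: the `p`-th exterior power inside the exterior algebra. -/
def formGrade (p : ℕ) : Submodule ℝ (ExteriorAlgebra ℝ V) :=
  LinearMap.range (ExteriorAlgebra.ι ℝ : V →ₗ[ℝ] ExteriorAlgebra ℝ V) ^ p

/-- Interior contraction `v⌟ ·` of a form by the vector `v`, using the metric
(through the symmetric bilinear form associated to `Q`). -/
def contr (Q : QuadraticForm ℝ V) (v : V) :
    ExteriorAlgebra ℝ V →ₗ[ℝ] ExteriorAlgebra ℝ V :=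
  contractLeft (Q := (0 : QuadraticForm ℝ V)) (QuadraticMap.associated (R := ℝ) Q v)

variable {ι : Type*} [Fintype ι] [DecidableEq ι]

/-- The `n`-fold contracted wedge product `α∧ₙβ`, defined inductively by
`α∧₀β = α∧β` and `α∧ₙβ = (Xₐ⌟α)∧_{n-1}(X^a⌟β)` (sum over `a`), where `Xl`/`Xu`
are a dual pair of orthonormal frames. -/
def cwedge (Q : QuadraticForm ℝ V) (Xl Xu : ι → V) :
    ℕ → ExteriorAlgebra ℝ V → ExteriorAlgebra ℝ V → ExteriorAlgebra ℝ V
  | 0, α, β => α * β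
  | n + 1, α, β => ∑ a, cwedge Q Xl Xu n (contr Q (Xl a) α) (contr Q (Xu a) β)

/-- `Xl` and `Xu` are mutually dual frames for the metric. -/
def DualFrames (Q : QuadraticForm ℝ V) (Xl Xu : ι → V) : Prop :=
  (∀ i j, QuadraticMap.associated (R := ℝ) Q (Xl i) (Xu j) = if i = j then 1 else 0) ∧
  (∀ w : V, ∑ a, (QuadraticMap.associated (R := ℝ) Q w (Xu a)) • Xl a = w) ∧
  (∀ w : V, ∑ a, (QuadraticMap.associated (R := ℝ) Q w (Xl a)) • Xu a = w)

/-- The product rule for interior contraction on the exterior algebra. -/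
lemma contr_mul (Q : QuadraticForm ℝ V) (X : V) (p : ℕ)
    (α : ExteriorAlgebra ℝ V) (hα : α ∈ formGrade p) :
    ∀ β : ExteriorAlgebra ℝ V,
      contr Q X (α * β) = contr Q X α * β + ((-1 : ℝ)) ^ p • (α * contr Q X β) := by
  refine Submodule.pow_induction_on_left' _
    (C := fun i x _ => ∀ β : ExteriorAlgebra ℝ V,
      contr Q X (x * β) = contr Q X x * β + ((-1 : ℝ)) ^ i • (x * contr Q X β)) ?_ ?_ ?_ hα
  · intro r β
    rw [contr, contractLeft_algebraMap, Algebra.algebraMap_eq_smul_one]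
    simp [smul_mul_assoc]
  · intro x y i hx hy ihx ihy β
    simp only [add_mul, map_add, ihx β, ihy β, smul_add]
    abel
  · intro m hm i x hx ih β
    obtain ⟨v, rfl⟩ := hm
    have key : ∀ γ : ExteriorAlgebra ℝ V,
        contr Q X (ExteriorAlgebra.ι ℝ v * γ)
          = (QuadraticMap.associated (R := ℝ) Q X v) • γ
            - ExteriorAlgebra.ι ℝ v * contr Q X γ := fun γ =>
      contractLeft_ι_mul (Q := (0 : QuadraticForm ℝ V))
        (QuadraticMap.associated (R := ℝ) Q X) v γ
    rw [mul_assoc, key, key, ih, mul_add, sub_mul, smul_mul_assoc, mul_smul_comm,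
      pow_succ, mul_smul, neg_one_smul, ← mul_assoc]
    simp only [mul_assoc]
    module

/-- Contraction kills `0`-forms. -/
lemma contr_grade_zero (Q : QuadraticForm ℝ V) (X : V)
    (α : ExteriorAlgebra ℝ V) (hα : α ∈ formGrade 0) : contr Q X α = 0 := by
  rw [formGrade, pow_zero, Submodule.mem_one] at hα
  obtain ⟨r, rfl⟩ := hα
  exact contractLeft_algebraMap _ _ r

/-- Contraction lowers the exterior degree by one. -/
lemma contr_grade (Q : QuadraticForm ℝ V) (X : V) (p : ℕ)
    (α : ExteriorAlgebra ℝ V) (hα : α ∈ formGrade (p + 1)) :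
    contr Q X α ∈ formGrade p := by
  induction p generalizing α with
  | zero =>
    refine Submodule.pow_induction_on_left' _
      (C := fun i x _ => i = 1 → contr Q X x ∈ (formGrade 0 : Submodule ℝ (ExteriorAlgebra ℝ V)))
      ?_ ?_ ?_ hα rfl
    · omega
    · intro x y i hx hy ihx ihy hi
      rw [map_add]; exact add_mem (ihx hi) (ihy hi)
    · intro m hm i x hx ih hi
      obtain rfl : i = 0 := by omega
      obtain ⟨v, rfl⟩ := hm
      rw [pow_zero, Submodule.mem_one] at hx
      obtain ⟨r, rfl⟩ := hx
      have := contractLeft_ι_mul (Q := (0 : QuadraticForm ℝ V))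
        (QuadraticMap.associated (R := ℝ) Q X) v (algebraMap ℝ _ r)
      rw [contr, this, contractLeft_algebraMap, mul_zero, sub_zero]
      refine Submodule.smul_mem _ _ ?_
      unfold formGrade
      rw [pow_zero]
      exact Submodule.algebraMap_mem r
  | succ q ih =>
    refine Submodule.pow_induction_on_left' _
      (C := fun i x _ => i = q + 2 → contr Q X x ∈ (formGrade (q + 1) :
        Submodule ℝ (ExteriorAlgebra ℝ V))) ?_ ?_ ?_ hα rfl
    · omega
    · intro x y i hx hy ihx ihy hi
      rw [map_add]; exact add_mem (ihx hi) (ihy hi)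
    · intro m hm i x hx ih' hi
      obtain rfl : i = q + 1 := by omega
      obtain ⟨v, rfl⟩ := hm
      have key := contractLeft_ι_mul (Q := (0 : QuadraticForm ℝ V))
        (QuadraticMap.associated (R := ℝ) Q X) v x
      rw [contr, key]
      refine sub_mem (Submodule.smul_mem _ _ hx) ?_
      have h1 : contr Q X x ∈ (formGrade q : Submodule ℝ (ExteriorAlgebra ℝ V)) := ih x hx
      have h2 : ExteriorAlgebra.ι ℝ v ∈
          LinearMap.range (ExteriorAlgebra.ι ℝ : V →ₗ[ℝ] ExteriorAlgebra ℝ V) := ⟨v, rfl⟩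
      have := Submodule.mul_mem_mul h2 h1
      rwa [formGrade, pow_succ'] at *

lemma cwedge_zero_left (Q : QuadraticForm ℝ V) (Xl Xu : ι → V) (n : ℕ)
    (β : ExteriorAlgebra ℝ V) : cwedge Q Xl Xu n 0 β = 0 := by
  induction n generalizing β with
  | zero => simp [cwedge]
  | succ n ih => simp [cwedge, map_zero, ih]

lemma cwedge_neg_left (Q : QuadraticForm ℝ V) (Xl Xu : ι → V) (n : ℕ)
    (α β : ExteriorAlgebra ℝ V) : cwedge Q Xl Xu n (-α) β = -cwedge Q Xl Xu n α β := by
  induction n generalizing α β with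
  | zero => simp [cwedge]
  | succ n ih => simp [cwedge, map_neg, ih, Finset.sum_neg_distrib]

lemma cwedge_neg_right (Q : QuadraticForm ℝ V) (Xl Xu : ι → V) (n : ℕ)
    (α β : ExteriorAlgebra ℝ V) : cwedge Q Xl Xu n α (-β) = -cwedge Q Xl Xu n α β := by
  induction n generalizing α β with
  | zero => simp [cwedge]
  | succ n ih => simp [cwedge, map_neg, ih, Finset.sum_neg_distrib]

/-- the interior derivative is a graded derivation over the contracted
wedge product: for a `p`-form `α`, any form `β` and a vector `X`,
`X⌟(α∧ₙβ) = (-1)^n (X⌟α)∧ₙβ + (-1)^p α∧ₙ(X⌟β)`. -/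
theorem hook_derivation_cwedge (Q : QuadraticForm ℝ V) (Xl Xu : ι → V)
    (hX : DualFrames Q Xl Xu) (p n : ℕ) (X : V)
    (α β : ExteriorAlgebra ℝ V) (hα : α ∈ formGrade p) :
    contr Q X (cwedge Q Xl Xu n α β)
        = ((-1 : ℝ)) ^ n • cwedge Q Xl Xu n (contr Q X α) β
          + ((-1 : ℝ)) ^ p • cwedge Q Xl Xu n α (contr Q X β) := by
  induction n generalizing p α β with
  | zero =>
    simpa [cwedge] using contr_mul Q X p α hα β
  | succ n ih =>
    cases p with
    | zero =>
      have h0 : contr Q X α = 0 := contr_grade_zero Q X α hα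
      have hl : ∀ v : V, contr Q v α = 0 := fun v => contr_grade_zero Q v α hα
      simp [cwedge, hl, h0, cwedge_zero_left, map_zero]
    | succ q =>
      have comm : ∀ (u w : V) (γ : ExteriorAlgebra ℝ V),
          contr Q u (contr Q w γ) = -(contr Q w (contr Q u γ)) := fun u w γ =>
        contractLeft_comm (Q := (0 : QuadraticForm ℝ V)) _ _ γ
      simp only [cwedge, map_sum]
      have step : ∀ a : ι,
          contr Q X (cwedge Q Xl Xu n (contr Q (Xl a) α) (contr Q (Xu a) β))
            = ((-1 : ℝ)) ^ (n + 1) • cwedge Q Xl Xu n (contr Q (Xl a) (contr Q X α))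
                (contr Q (Xu a) β)
              + ((-1 : ℝ)) ^ (q + 1) • cwedge Q Xl Xu n (contr Q (Xl a) α)
                (contr Q (Xu a) (contr Q X β)) := by
        intro a
        rw [ih q (contr Q (Xl a) α) (contr Q (Xu a) β) (contr_grade Q (Xl a) q α hα),
          comm X (Xl a) α, comm X (Xu a) β, cwedge_neg_left, cwedge_neg_right]
        simp [pow_succ, mul_smul]
      rw [Finset.sum_congr rfl fun a _ => step a, Finset.sum_add_distrib,
        ← Finset.smul_sum, ← Finset.smul_sum]
end
end

section
/- For a 1-form ω, a p-form α, and any form β, the contracted wedge product satisfies (ω∧α)∧ₙβ = (-1)^n ω∧(α∧ₙβ) + n·α∧_{n-1}(ω♯⌟β), and α∧ₙ(ω∧β) = (-1)^p ω∧(α∧ₙβ) + n·(ω♯⌟α)∧_{n-1}β. -/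
noncomputable section
open CliffordAlgebra

variable {V : Type*} [AddCommGroup V] [Module ℝ V]

variable {ι : Type*} [Fintype ι] [DecidableEq ι]

/-! ### Auxiliary lemmas -/

section Aux

variable (Q : QuadraticForm ℝ V)

lemma contr_ι_mul (v w : V) (x : ExteriorAlgebra ℝ V) :
    contr Q v (ExteriorAlgebra.ι ℝ w * x)
      = QuadraticMap.associated (R := ℝ) Q v w • x
        - ExteriorAlgebra.ι ℝ w * contr Q v x :=
  CliffordAlgebra.contractLeft_ι_mul _ _ _

lemma contr_comm' (v u : V) (x : ExteriorAlgebra ℝ V) :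
    contr Q v (contr Q u x) = - contr Q u (contr Q v x) :=
  CliffordAlgebra.contractLeft_comm _ _ _

lemma contr_algebraMap' (v : V) (r : ℝ) :
    contr Q v (algebraMap ℝ (ExteriorAlgebra ℝ V) r) = 0 :=
  CliffordAlgebra.contractLeft_algebraMap _ _ _

lemma assoc_symm (v w : V) :
    QuadraticMap.associated (R := ℝ) Q v w = QuadraticMap.associated (R := ℝ) Q w v := by
  have h := QuadraticMap.associated_isSymm (S := ℝ) (R := ℝ) Q v w
  rw [← h]

lemma contr_sum_smul {ι' : Type*} (s : Finset ι') (c : ι' → ℝ) (v : ι' → V)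
    (x : ExteriorAlgebra ℝ V) :
    ∑ a ∈ s, c a • contr Q (v a) x = contr Q (∑ a ∈ s, c a • v a) x := by
  simp only [contr, map_sum, map_smul, LinearMap.sum_apply, LinearMap.smul_apply]

/-- The contracted wedge as a bilinear map. -/
def cwedgeL (Xl Xu : ι → V) :
    ℕ → ExteriorAlgebra ℝ V →ₗ[ℝ] ExteriorAlgebra ℝ V →ₗ[ℝ] ExteriorAlgebra ℝ V
  | 0 => LinearMap.mul ℝ (ExteriorAlgebra ℝ V)
  | n + 1 => ∑ a, (cwedgeL Xl Xu n).compl₁₂ (contr Q (Xl a)) (contr Q (Xu a))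

lemma cwedgeL_apply (Xl Xu : ι → V) :
    ∀ (n : ℕ) (α β : ExteriorAlgebra ℝ V),
      cwedgeL Q Xl Xu n α β = cwedge Q Xl Xu n α β
  | 0, α, β => rfl
  | n + 1, α, β => by
    simp only [cwedgeL, cwedge, LinearMap.sum_apply, LinearMap.compl₁₂_apply]
    exact Finset.sum_congr rfl fun a _ => cwedgeL_apply Xl Xu n _ _

lemma contr_zero_form (v : V) {α : ExteriorAlgebra ℝ V} (hα : α ∈ formGrade 0) :
    contr Q v α = 0 := by
  rw [formGrade, pow_zero] at hα
  obtain ⟨r, rfl⟩ := Submodule.mem_one.mp hα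
  exact contr_algebraMap' Q v r

lemma contr_mem (v : V) {p : ℕ} {α : ExteriorAlgebra ℝ V} (hα : α ∈ formGrade p) :
    contr Q v α ∈ formGrade (p - 1) := by
  rw [formGrade] at hα
  induction hα using Submodule.pow_induction_on_left' with
  | algebraMap r => rw [contr_algebraMap']; exact Submodule.zero_mem _
  | add x y i hx hy ihx ihy => rw [map_add]; exact Submodule.add_mem _ ihx ihy
  | mem_mul m hm i x hx ih =>
    obtain ⟨u, rfl⟩ := hm
    rw [contr_ι_mul]
    refine Submodule.sub_mem _ (Submodule.smul_mem _ _ ?_) ?_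
    · simpa [formGrade] using hx
    · rcases i with _ | j
      · rw [contr_zero_form Q v (by simpa [formGrade] using hx), mul_zero]
        exact Submodule.zero_mem _
      · show _ ∈ formGrade (j + 1)
        rw [formGrade, pow_succ']
        exact Submodule.mul_mem_mul (LinearMap.mem_range_self _ u) ih

lemma mul_ι_comm (w : V) {p : ℕ} {α : ExteriorAlgebra ℝ V} (hα : α ∈ formGrade p) :
    α * ExteriorAlgebra.ι ℝ w = ((-1 : ℝ)) ^ p • (ExteriorAlgebra.ι ℝ w * α) := by
  rw [formGrade] at hα
  induction hα using Submodule.pow_induction_on_left' with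
  | algebraMap r => rw [pow_zero, one_smul, Algebra.commutes]
  | add x y i hx hy ihx ihy => rw [add_mul, ihx, ihy, mul_add, smul_add]
  | mem_mul m hm i x hx ih =>
    obtain ⟨u, rfl⟩ := hm
    have hswap : ExteriorAlgebra.ι ℝ u * ExteriorAlgebra.ι ℝ w
        = -(ExteriorAlgebra.ι ℝ w * ExteriorAlgebra.ι ℝ u) :=
      CliffordAlgebra.ι_mul_ι_comm_of_isOrtho (by simp [QuadraticMap.IsOrtho])
    rw [mul_assoc, ih, mul_smul_comm, ← mul_assoc, hswap, pow_succ, mul_comm ((-1:ℝ)^i),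
      mul_smul, neg_one_smul, neg_mul, smul_neg, ← mul_assoc]

end Aux


section Main

variable (Q : QuadraticForm ℝ V) (Xl Xu : ι → V)

lemma cw_smul_left (n : ℕ) (r : ℝ) (α β : ExteriorAlgebra ℝ V) :
    cwedge Q Xl Xu n (r • α) β = r • cwedge Q Xl Xu n α β := by
  simp only [← cwedgeL_apply, map_smul, LinearMap.smul_apply]

lemma cw_smul_right (n : ℕ) (r : ℝ) (α β : ExteriorAlgebra ℝ V) :
    cwedge Q Xl Xu n α (r • β) = r • cwedge Q Xl Xu n α β := by
  simp only [← cwedgeL_apply, map_smul]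

lemma cw_sub_left (n : ℕ) (α α' β : ExteriorAlgebra ℝ V) :
    cwedge Q Xl Xu n (α - α') β = cwedge Q Xl Xu n α β - cwedge Q Xl Xu n α' β := by
  simp only [← cwedgeL_apply, map_sub, LinearMap.sub_apply]

lemma cw_sub_right (n : ℕ) (α β β' : ExteriorAlgebra ℝ V) :
    cwedge Q Xl Xu n α (β - β') = cwedge Q Xl Xu n α β - cwedge Q Xl Xu n α β' := by
  simp only [← cwedgeL_apply, map_sub]

lemma cw_neg_left (n : ℕ) (α β : ExteriorAlgebra ℝ V) :
    cwedge Q Xl Xu n (-α) β = - cwedge Q Xl Xu n α β := by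
  simp only [← cwedgeL_apply, map_neg, LinearMap.neg_apply]

lemma cw_neg_right (n : ℕ) (α β : ExteriorAlgebra ℝ V) :
    cwedge Q Xl Xu n α (-β) = - cwedge Q Xl Xu n α β := by
  simp only [← cwedgeL_apply, map_neg]

lemma cw_zero_left (n : ℕ) (β : ExteriorAlgebra ℝ V) :
    cwedge Q Xl Xu n 0 β = 0 := by
  simp only [← cwedgeL_apply, map_zero, LinearMap.zero_apply]

lemma cw_contr_sum_left (n : ℕ) (c : ι → ℝ) (v : ι → V) (α β : ExteriorAlgebra ℝ V) :
    ∑ a, c a • cwedge Q Xl Xu n (contr Q (v a) α) β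
      = cwedge Q Xl Xu n (contr Q (∑ a, c a • v a) α) β := by
  rw [← contr_sum_smul]
  simp only [← cwedgeL_apply, map_sum, LinearMap.sum_apply, map_smul, LinearMap.smul_apply]

lemma cw_contr_sum_right (n : ℕ) (c : ι → ℝ) (v : ι → V) (α β : ExteriorAlgebra ℝ V) :
    ∑ a, c a • cwedge Q Xl Xu n α (contr Q (v a) β)
      = cwedge Q Xl Xu n α (contr Q (∑ a, c a • v a) β) := by
  rw [← contr_sum_smul]
  simp only [← cwedgeL_apply, map_sum, map_smul]

lemma n_smul_sum (n : ℕ) (α γ : ExteriorAlgebra ℝ V) :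
    (n : ℝ) • ∑ a, cwedge Q Xl Xu (n - 1) (contr Q (Xl a) α) (contr Q (Xu a) γ)
      = (n : ℝ) • cwedge Q Xl Xu n α γ := by
  cases n with
  | zero => simp
  | succ m =>
    congr 1

lemma lemF (hX : DualFrames Q Xl Xu) :
    ∀ (n : ℕ) (w : V) (α β : ExteriorAlgebra ℝ V),
      cwedge Q Xl Xu n (ExteriorAlgebra.ι ℝ w * α) β
        = ((-1 : ℝ)) ^ n • (ExteriorAlgebra.ι ℝ w * cwedge Q Xl Xu n α β)
          + (n : ℝ) • cwedge Q Xl Xu (n - 1) α (contr Q w β) := by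
  intro n
  induction n with
  | zero => intro w α β; simp [cwedge, mul_assoc]
  | succ n ih =>
    intro w α β
    have e : ∀ a : ι, cwedge Q Xl Xu n (contr Q (Xl a) (ExteriorAlgebra.ι ℝ w * α))
          (contr Q (Xu a) β)
        = QuadraticMap.associated (R := ℝ) Q w (Xl a)
              • cwedge Q Xl Xu n α (contr Q (Xu a) β)
          - (((-1 : ℝ)) ^ n
                • (ExteriorAlgebra.ι ℝ w
                    * cwedge Q Xl Xu n (contr Q (Xl a) α) (contr Q (Xu a) β))
              + (n : ℝ) • cwedge Q Xl Xu (n - 1) (contr Q (Xl a) α)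
                  (contr Q w (contr Q (Xu a) β))) := by
      intro a
      rw [contr_ι_mul, cw_sub_left, cw_smul_left, ih, assoc_symm]
    show (∑ a, cwedge Q Xl Xu n (contr Q (Xl a) (ExteriorAlgebra.ι ℝ w * α))
          (contr Q (Xu a) β)) = _
    simp only [e]
    rw [Finset.sum_sub_distrib, Finset.sum_add_distrib,
      cw_contr_sum_right Q Xl Xu n _ Xu α β, hX.2.2 w]
    have hB : (∑ a, ((-1 : ℝ)) ^ n • (ExteriorAlgebra.ι ℝ w
          * cwedge Q Xl Xu n (contr Q (Xl a) α) (contr Q (Xu a) β)))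
        = ((-1 : ℝ)) ^ n • (ExteriorAlgebra.ι ℝ w * cwedge Q Xl Xu (n + 1) α β) := by
      rw [← Finset.smul_sum, ← Finset.mul_sum]
      rfl
    have hC : (∑ a, (n : ℝ) • cwedge Q Xl Xu (n - 1) (contr Q (Xl a) α)
          (contr Q w (contr Q (Xu a) β)))
        = -((n : ℝ) • cwedge Q Xl Xu n α (contr Q w β)) := by
      have : ∀ a : ι, (n : ℝ) • cwedge Q Xl Xu (n - 1) (contr Q (Xl a) α)
            (contr Q w (contr Q (Xu a) β))
          = -((n : ℝ) • cwedge Q Xl Xu (n - 1) (contr Q (Xl a) α)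
              (contr Q (Xu a) (contr Q w β))) := by
        intro a
        rw [contr_comm', cw_neg_right, smul_neg]
      simp only [this]
      rw [Finset.sum_neg_distrib, ← Finset.smul_sum, n_smul_sum]
    rw [hB, hC]
    show cwedge Q Xl Xu n α (contr Q w β) - _
        = ((-1:ℝ)) ^ (n+1) • (ExteriorAlgebra.ι ℝ w * cwedge Q Xl Xu (n+1) α β)
          + ((n+1 : ℕ) : ℝ) • cwedge Q Xl Xu n α (contr Q w β)
    push_cast [pow_succ]
    module

lemma lemG (hX : DualFrames Q Xl Xu) :
    ∀ (n p : ℕ) (w : V) (α β : ExteriorAlgebra ℝ V), α ∈ formGrade p →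
      cwedge Q Xl Xu n α (ExteriorAlgebra.ι ℝ w * β)
        = ((-1 : ℝ)) ^ p • (ExteriorAlgebra.ι ℝ w * cwedge Q Xl Xu n α β)
          + (n : ℝ) • cwedge Q Xl Xu (n - 1) (contr Q w α) β := by
  intro n
  induction n with
  | zero =>
    intro p w α β hα
    show α * (ExteriorAlgebra.ι ℝ w * β) = ((-1:ℝ))^p • (ExteriorAlgebra.ι ℝ w * (α * β)) + _
    rw [← mul_assoc, mul_ι_comm w hα, smul_mul_assoc, mul_assoc]
    simp
  | succ n ih =>
    intro p w α β hα
    rcases p with _ | q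
    · have h0 : ∀ v : V, contr Q v α = 0 := fun v => contr_zero_form Q v hα
      have hz : ∀ γ : ExteriorAlgebra ℝ V, cwedge Q Xl Xu (n + 1) α γ = 0 := by
        intro γ
        show (∑ a, cwedge Q Xl Xu n (contr Q (Xl a) α) (contr Q (Xu a) γ)) = 0
        simp [h0, cw_zero_left]
      rw [hz, hz, h0, Nat.add_sub_cancel, cw_zero_left]
      simp
    · have e : ∀ a : ι, cwedge Q Xl Xu n (contr Q (Xl a) α)
            (contr Q (Xu a) (ExteriorAlgebra.ι ℝ w * β))
          = QuadraticMap.associated (R := ℝ) Q w (Xu a)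
                • cwedge Q Xl Xu n (contr Q (Xl a) α) β
            - (((-1 : ℝ)) ^ q
                  • (ExteriorAlgebra.ι ℝ w
                      * cwedge Q Xl Xu n (contr Q (Xl a) α) (contr Q (Xu a) β))
                + (n : ℝ) • cwedge Q Xl Xu (n - 1)
                    (contr Q w (contr Q (Xl a) α)) (contr Q (Xu a) β)) := by
        intro a
        have hmem : contr Q (Xl a) α ∈ formGrade q := by
          simpa using contr_mem Q (Xl a) hα
        rw [contr_ι_mul, cw_sub_right, cw_smul_right, ih q w _ _ hmem, assoc_symm]
      show (∑ a, cwedge Q Xl Xu n (contr Q (Xl a) α)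
            (contr Q (Xu a) (ExteriorAlgebra.ι ℝ w * β))) = _
      simp only [e]
      rw [Finset.sum_sub_distrib, Finset.sum_add_distrib,
        cw_contr_sum_left Q Xl Xu n _ Xl α β, hX.2.1 w]
      have hB : (∑ a, ((-1 : ℝ)) ^ q • (ExteriorAlgebra.ι ℝ w
            * cwedge Q Xl Xu n (contr Q (Xl a) α) (contr Q (Xu a) β)))
          = ((-1 : ℝ)) ^ q • (ExteriorAlgebra.ι ℝ w * cwedge Q Xl Xu (n + 1) α β) := by
        rw [← Finset.smul_sum, ← Finset.mul_sum]
        rfl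
      have hC : (∑ a, (n : ℝ) • cwedge Q Xl Xu (n - 1)
            (contr Q w (contr Q (Xl a) α)) (contr Q (Xu a) β))
          = -((n : ℝ) • cwedge Q Xl Xu n (contr Q w α) β) := by
        have : ∀ a : ι, (n : ℝ) • cwedge Q Xl Xu (n - 1)
              (contr Q w (contr Q (Xl a) α)) (contr Q (Xu a) β)
            = -((n : ℝ) • cwedge Q Xl Xu (n - 1)
                (contr Q (Xl a) (contr Q w α)) (contr Q (Xu a) β)) := by
          intro a
          rw [contr_comm', cw_neg_left, smul_neg]
        simp only [this]
        rw [Finset.sum_neg_distrib, ← Finset.smul_sum, n_smul_sum]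
      rw [hB, hC]
      show cwedge Q Xl Xu n (contr Q w α) β - _
          = ((-1:ℝ)) ^ (q+1) • (ExteriorAlgebra.ι ℝ w * cwedge Q Xl Xu (n+1) α β)
            + ((n+1 : ℕ) : ℝ) • cwedge Q Xl Xu n (contr Q w α) β
      push_cast [pow_succ]
      module

end Main

/-- for a 1-form `ω` (identified with the vector `w = ω♯` via the
metric), a `p`-form `α` and any form `β`,
`(ω∧α)∧ₙβ = (-1)^n ω∧(α∧ₙβ) + n·α∧_{n-1}(ω♯⌟β)` and
`α∧ₙ(ω∧β) = (-1)^p ω∧(α∧ₙβ) + n·(ω♯⌟α)∧_{n-1}β`. -/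
theorem cwedge_one_form_identities (Q : QuadraticForm ℝ V) (Xl Xu : ι → V)
    (hX : DualFrames Q Xl Xu) (p n : ℕ) (w : V)
    (α β : ExteriorAlgebra ℝ V) (hα : α ∈ formGrade p) :
    cwedge Q Xl Xu n (ExteriorAlgebra.ι ℝ w * α) β
        = ((-1 : ℝ)) ^ n • (ExteriorAlgebra.ι ℝ w * cwedge Q Xl Xu n α β)
          + (n : ℝ) • cwedge Q Xl Xu (n - 1) α (contr Q w β) ∧
    cwedge Q Xl Xu n α (ExteriorAlgebra.ι ℝ w * β)
        = ((-1 : ℝ)) ^ p • (ExteriorAlgebra.ι ℝ w * cwedge Q Xl Xu n α β)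
          + (n : ℝ) • cwedge Q Xl Xu (n - 1) (contr Q w α) β :=
  ⟨lemF Q Xl Xu hX n w α β, lemG Q Xl Xu hX n p w α β hα⟩
end
end
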